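/- Let m, k be integers with m ≥ 5 and 2 ≤ k ≤ ⌊(m-1)/2⌋, let S be a nonempty subset of {1,...,k}, and let f_{(m,k)} be the associated function on 𝔽_3^m. Then the map (u, v) ↦ c_{u,v} from 𝔽_3 × 𝔽_3^m to the code C_{f_{(m,k)}} is injective; consequently C_{f_{(m,k)}} has exactly 3^{m+1} codewords, i.e., it has length 3^m - 1 and dimension m + 1. -/
import Mathlib


open Finset

/-- The function `f_{(m,k)} : 𝔽_3^m → 𝔽_3` attached to a subset `S ⊆ {1,…,k}`:
`-1` if `wt(x) ∈ S`, `1` if `wt(x) ∈ {1,…,k} \ S`, `0` otherwise. -/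
def fmk {m : ℕ} (k : ℕ) (S : Finset ℕ) (x : Fin m → ZMod 3) : ZMod 3 :=
  if hammingNorm x ∈ S then -1
  else if hammingNorm x ∈ Finset.Icc 1 k then 1
  else 0

/-- The codeword `c_{u,v}` of the code `C_h`, as a function on `𝔽_3^m \ {0}`. -/
def codeword {m : ℕ} (h : (Fin m → ZMod 3) → ZMod 3)
    (p : ZMod 3 × (Fin m → ZMod 3)) (x : {x : Fin m → ZMod 3 // x ≠ 0}) : ZMod 3 :=
  p.1 * h x.1 + ∑ j, p.2 j * x.1 j

/-- For `m ≥ 5`, `2 ≤ k ≤ ⌊(m-1)/2⌋` and `∅ ≠ S ⊆ {1,…,k}`, the map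
`(u,v) ↦ c_{u,v}` into `C_{f_{(m,k)}}` is injective; consequently `C_{f_{(m,k)}}`
has exactly `3^{m+1}` codewords (length `3^m - 1`, dimension `m + 1`). -/
theorem stmt_11 (m k : ℕ) (hm : 5 ≤ m) (hk2 : 2 ≤ k) (hk : k ≤ (m - 1) / 2)
    (S : Finset ℕ) (hS : S.Nonempty) (hSsub : S ⊆ Finset.Icc 1 k) :
    Function.Injective (codeword (fmk (m := m) k S))
    ∧ (Finset.univ.image (codeword (fmk (m := m) k S))).card = 3 ^ (m + 1) := by
  have hkm : k < m := lt_of_le_of_lt hk (by omega)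
  have hinj : Function.Injective (codeword (fmk (m := m) k S)) := by
    intro p q hpq
    have heq : ∀ x : {x : Fin m → ZMod 3 // x ≠ 0},
        p.1 * fmk k S x.1 + ∑ j, p.2 j * x.1 j
          = q.1 * fmk k S x.1 + ∑ j, q.2 j * x.1 j := by
      intro x
      exact congrFun hpq x
    -- the all-ones vector
    have hmpos : 0 < m := by omega
    have i0 : Fin m := ⟨0, hmpos⟩
    set ones : Fin m → ZMod 3 := fun _ => 1 with hones
    have hones0 : ones ≠ 0 := by
      intro h
      have := congrFun h ⟨0, hmpos⟩
      simp [ones] at this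
    have hnorm_ones : hammingNorm ones = m := by
      unfold hammingNorm
      rw [show ({i | ones i ≠ 0} : Finset (Fin m)) = Finset.univ by
        ext i; simp [ones]]
      simp
    have hf_ones : fmk k S ones = 0 := by
      unfold fmk
      rw [hnorm_ones]
      rw [if_neg, if_neg]
      · simp; omega
      · intro hmem
        have := hSsub hmem
        simp at this; omega
    -- variants: all ones except one coordinate equal to 2
    have key2 : ∀ j : Fin m,
        (∑ i, p.2 i) + p.2 j = (∑ i, q.2 i) + q.2 j := by
      intro j
      set y : Fin m → ZMod 3 := fun i => if i = j then 2 else 1 with hy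
      have hy0 : y ≠ 0 := by
        intro h
        have := congrFun h j
        simp [y] at this
        exact absurd this (by decide)
      have hnorm_y : hammingNorm y = m := by
        unfold hammingNorm
        rw [show ({i | y i ≠ 0} : Finset (Fin m)) = Finset.univ by
          ext i; by_cases hij : i = j <;> simp [y, hij] <;> decide]
        simp
      have hf_y : fmk k S y = 0 := by
        unfold fmk
        rw [hnorm_y]
        rw [if_neg, if_neg]
        · simp; omega
        · intro hmem
          have := hSsub hmem
          simp at this; omega
      have h1 := heq ⟨y, hy0⟩
      simp only [hf_y, mul_zero, zero_add] at h1
      have hsum : ∀ w : Fin m → ZMod 3,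
          ∑ i, w i * y i = (∑ i, w i) + w j := by
        intro w
        have : ∀ i, w i * y i = w i + (if i = j then w i else 0) := by
          intro i
          by_cases hij : i = j <;> simp [y, hij] <;> ring
        rw [Finset.sum_congr rfl fun i _ => this i, Finset.sum_add_distrib,
          Finset.sum_ite_eq' Finset.univ j w]
        simp
      rw [hsum p.2, hsum q.2] at h1
      exact h1
    have h0 := heq ⟨ones, hones0⟩
    simp only [hf_ones, mul_zero, zero_add] at h0
    have hsum_ones : ∀ w : Fin m → ZMod 3, ∑ i, w i * ones i = ∑ i, w i := by
      intro w; apply Finset.sum_congr rfl; intro i _; simp [ones]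
    rw [hsum_ones p.2, hsum_ones q.2] at h0
    have hv : p.2 = q.2 := by
      funext j
      have := key2 j
      rw [h0] at this
      exact add_left_cancel this
    -- now determine the first component using a weight-s vector, s ∈ S
    obtain ⟨s, hsS⟩ := hS
    have hs' := hSsub hsS
    simp only [Finset.mem_Icc] at hs'
    have hsm : s ≤ m := le_trans hs'.2 (le_of_lt hkm)
    set z : Fin m → ZMod 3 := fun i => if (i : ℕ) < s then 1 else 0 with hz
    have hz0 : z ≠ 0 := by
      intro h
      have := congrFun h ⟨0, hmpos⟩
      simp [z] at this
      omega
    have hnorm_z : hammingNorm z = s := by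
      unfold hammingNorm
      have hlt : ∀ a ∈ Finset.range s, a < m := fun a ha => by
        simp at ha; omega
      rw [show ({i | z i ≠ 0} : Finset (Fin m)) = (Finset.range s).attachFin hlt by
        ext i
        simp only [z, Finset.mem_attachFin, Finset.mem_filter, Finset.mem_univ,
          true_and, Finset.mem_range, ne_eq, ite_eq_right_iff, not_forall]
        constructor
        · rintro ⟨h, -⟩; exact h
        · intro h; exact ⟨h, by decide⟩]
      rw [Finset.card_attachFin]
      simp
    have hf_z : fmk k S z = -1 := by
      unfold fmk
      rw [hnorm_z, if_pos hsS]
    have h2 := heq ⟨z, hz0⟩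
    rw [hf_z, hv] at h2
    have hu : p.1 = q.1 := by
      have h3 : p.1 * (-1) = q.1 * (-1) := add_right_cancel h2
      have := mul_right_cancel₀ (b := (-1 : ZMod 3)) (by decide) h3
      exact this
    exact Prod.ext hu hv
  refine ⟨hinj, ?_⟩
  rw [Finset.card_image_of_injective _ hinj, Finset.card_univ]
  simp [pow_succ, mul_comm]
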